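/- Let G=(V,E) be a finite simple graph. Let D be the digraph on the disjoint union {r} ⊎ (V×{1,2}) whose arcs are ((u,1),(v,2)) whenever u=v or {u,v} ∈ E, and (r,(v,1)) for every v ∈ V. Let T = V×{2}. Then a set S ⊆ V is a dominating set of G if and only if S×{1} is a solution to the Directed Steiner Tree instance (D,r,T), i.e., every vertex of T is reachable from r by a directed path in the subdigraph of D induced by (S×{1})∪T∪{r}. -/
import Mathlib


/-- Reachability by a directed path all of whose vertices lie in `X`,
    via the reflexive-transitive closure of the arc relation restricted to `X`. -/
def reachIn {V : Type*} (A : V → V → Prop) (X : Set V) (u v : V) : Prop :=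
  Relation.ReflTransGen (fun a b => a ∈ X ∧ b ∈ X ∧ A a b) u v

/-- Arcs of the digraph built from a graph `G`: root `r = Sum.inl ()`,
    first copy `(v,1) = Sum.inr (Sum.inl v)`, second copy `(v,2) = Sum.inr (Sum.inr v)`.
    There is an arc from `(u,1)` to `(v,2)` whenever `u = v` or `{u,v} ∈ E(G)`,
    and an arc from `r` to `(v,1)` for every `v`. -/
def dsArc {V : Type*} (G : SimpleGraph V) :
    (Unit ⊕ V ⊕ V) → (Unit ⊕ V ⊕ V) → Prop
  | Sum.inl _, Sum.inr (Sum.inl _) => True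
  | Sum.inr (Sum.inl u), Sum.inr (Sum.inr v) => u = v ∨ G.Adj u v
  | _, _ => False

theorem stmt_13 {V : Type*} [Fintype V] (G : SimpleGraph V) (S : Set V) :
    (∀ v : V, v ∈ S ∨ ∃ u ∈ S, G.Adj v u) ↔
    (∀ v : V, reachIn (dsArc G)
      ((fun u => (Sum.inr (Sum.inl u) : Unit ⊕ V ⊕ V)) '' S ∪
        Set.range (fun v : V => (Sum.inr (Sum.inr v) : Unit ⊕ V ⊕ V)) ∪
        {(Sum.inl () : Unit ⊕ V ⊕ V)})
      (Sum.inl ()) (Sum.inr (Sum.inr v))) := by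
  constructor
  · intro h v
    rcases h v with hv | ⟨u, hu, hadj⟩
    · exact Relation.ReflTransGen.head (b := Sum.inr (Sum.inl v))
        ⟨Or.inr rfl, Or.inl (Or.inl ⟨v, hv, rfl⟩), trivial⟩
        (Relation.ReflTransGen.single
          ⟨Or.inl (Or.inl ⟨v, hv, rfl⟩), Or.inl (Or.inr ⟨v, rfl⟩), Or.inl rfl⟩)
    · exact Relation.ReflTransGen.head (b := Sum.inr (Sum.inl u))
        ⟨Or.inr rfl, Or.inl (Or.inl ⟨u, hu, rfl⟩), trivial⟩
        (Relation.ReflTransGen.single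
          ⟨Or.inl (Or.inl ⟨u, hu, rfl⟩), Or.inl (Or.inr ⟨v, rfl⟩), Or.inr hadj.symm⟩)
  · intro h v
    rcases (h v).cases_tail with heq | ⟨(_ | u | u), -, hb, -, harc⟩
    · exact absurd heq (by simp)
    · exact absurd harc (by simp [dsArc])
    · rcases hb with (⟨w, hw, hweq⟩ | ⟨w, hw⟩) | hb
      · obtain rfl : w = u := by simpa using hweq
        rcases harc with rfl | hadj
        · exact Or.inl hw
        · exact Or.inr ⟨_, hw, hadj.symm⟩
      · simp at hw
      · simp at hb
    · exact absurd harc (by simp [dsArc])
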